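/- arXiv:2301.05090 — 7 statements merged into one kernel-verified Lean document; each statement's English description precedes it below -/
import Mathlib

section
/- Let 0 < r₁ ≤ r₂ ≤ ... ≤ rₙ < 1 be real numbers and c₁,...,cₙ nonzero reals, and define E(s) = Σᵢ cᵢ rᵢ^s. If the sequence c₁,...,cₙ has K sign changes, then the function E : ℝ → ℝ changes sign at most K times on ℝ. -/
/-!
Write `E(s) = ∑ cᵢ rᵢ ^ s` and group the indices into blocks `b i = 0, 1, …, K` on which the
coefficients have the weak sign `(-1) ^ b i`, the bases increasing from block to block. Choose
`μ` between the bases of blocks `0` and `1`. Then `-E(s) / μ ^ s = ∑ (-cᵢ) (rᵢ / μ) ^ s` changes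
sign as often as `E`, and its derivative `∑ (-cᵢ log (rᵢ / μ)) (rᵢ / μ) ^ s` has one block
fewer, because `log (rᵢ / μ)` is `≤ 0` on block `0` and `≥ 0` on the others. By the mean value
theorem the derivative loses at most one sign change, so induction on `K` reduces to a single
block, where `E` has constant sign.
-/

open Finset

def ChangesSignAtLeast (f : ℝ → ℝ) (m : ℕ) : Prop :=
  ∃ t : Fin (m + 1) → ℝ, StrictMono t ∧ ∀ i : Fin m, f (t i.castSucc) * f (t i.succ) < 0

lemma sub_mul_sub_neg_of_mul_neg {x y z : ℝ} (hxy : x * y < 0) (hyz : y * z < 0) :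
    (y - x) * (z - y) < 0 := by
  have hy : 0 < y * y := mul_self_pos.2 fun h => by simp [h] at hxy
  have hxz : 0 < x * z :=
    pos_of_mul_pos_left (b := y * y) (by nlinarith [mul_pos_of_neg_of_neg hxy hyz]) hy.le
  nlinarith

namespace ChangesSignAtLeast

variable {f : ℝ → ℝ} {m : ℕ}

theorem eq_zero_of_nonneg (hf : ∀ x, 0 ≤ f x) (h : ChangesSignAtLeast f m) : m = 0 := by
  obtain ⟨t, -, halt⟩ := h
  cases m with
  | zero => rfl
  | succ m => exact absurd (halt 0) (mul_nonneg (hf _) (hf _)).not_gt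

theorem mul {g : ℝ → ℝ} (h : ChangesSignAtLeast f m) (hg : ∀ x y, 0 < g x * g y) :
    ChangesSignAtLeast (fun x => f x * g x) m := by
  obtain ⟨t, ht, halt⟩ := h
  refine ⟨t, ht, fun i => ?_⟩
  calc f (t i.castSucc) * g (t i.castSucc) * (f (t i.succ) * g (t i.succ))
      = f (t i.castSucc) * f (t i.succ) * (g (t i.castSucc) * g (t i.succ)) := by ring
    _ < 0 := mul_neg_of_neg_of_pos (halt i) (hg _ _)

/-- On each interval `(tᵢ, tᵢ₊₁)` take a mean value point: since `f tᵢ` and `f tᵢ₊₁` have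
opposite signs, the slope there has the sign of `f tᵢ₊₁`, and these signs alternate. -/
theorem of_hasDerivAt {f' : ℝ → ℝ} (hf : ∀ x, HasDerivAt f (f' x) x)
    (h : ChangesSignAtLeast f (m + 1)) : ChangesSignAtLeast f' m := by
  obtain ⟨t, ht, halt⟩ := h
  have hcont : Continuous f := continuous_iff_continuousAt.2 fun x => (hf x).continuousAt
  choose u hu hslope using fun i : Fin (m + 1) =>
    exists_hasDerivAt_eq_slope f f' (ht i.castSucc_lt_succ) hcont.continuousOn fun x _ => hf x
  refine ⟨u, Fin.strictMono_iff_lt_succ.2 fun i => ?_, fun i => ?_⟩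
  · have h1 := (hu i.castSucc).2
    rw [Fin.succ_castSucc] at h1
    exact h1.trans (hu i.succ).1
  · rw [hslope, hslope, div_mul_div_comm, Fin.succ_castSucc]
    refine div_neg_of_neg_of_pos (sub_mul_sub_neg_of_mul_neg (halt i.castSucc) ?_)
      (mul_pos (sub_pos.2 (ht i.castSucc.castSucc_lt_succ)) (sub_pos.2 (ht i.succ.castSucc_lt_succ)))
    rw [← Fin.succ_castSucc]
    exact halt i.succ

end ChangesSignAtLeast

noncomputable def expSum {ι : Type*} [Fintype ι] (c r : ι → ℝ) (s : ℝ) : ℝ :=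
  ∑ i, c i * r i ^ s

section expSum

variable {ι : Type*} [Fintype ι] {c r : ι → ℝ}

theorem expSum_nonneg (hr : ∀ i, 0 ≤ r i) (hc : ∀ i, 0 ≤ c i) (s : ℝ) : 0 ≤ expSum c r s :=
  sum_nonneg fun i _ => mul_nonneg (hc i) (Real.rpow_nonneg (hr i) s)

theorem hasDerivAt_expSum (hr : ∀ i, 0 < r i) (s : ℝ) :
    HasDerivAt (expSum c r) (expSum (fun i => c i * Real.log (r i)) r s) s :=
  (HasDerivAt.fun_sum (u := univ) fun i _ =>
    (Real.hasStrictDerivAt_const_rpow (hr i) s).hasDerivAt.const_mul (c i)).congr_deriv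
    (sum_congr rfl fun i _ => by ring)

theorem expSum_div (hr : ∀ i, 0 ≤ r i) {μ : ℝ} (hμ : 0 < μ) (s : ℝ) :
    expSum c (fun i => r i / μ) s = expSum c r s / μ ^ s := by
  simp only [expSum, sum_div, Real.div_rpow (hr _) hμ.le, mul_div_assoc]

theorem exists_pos_separating {b : ι → ℕ} (hr : ∀ i, 0 < r i)
    (hbr : ∀ i j, b i < b j → r i ≤ r j) (hb : ∃ j, 0 < b j) :
    ∃ μ > 0, ∀ i, (b i = 0 → r i ≤ μ) ∧ (0 < b i → μ ≤ r i) := by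
  classical
  obtain ⟨j, hj⟩ := hb
  have hS : (univ.filter fun i => 0 < b i).Nonempty := ⟨j, by simpa using hj⟩
  refine ⟨_, (lt_inf'_iff hS).2 fun i _ => hr i, fun i => ⟨fun hi => ?_, fun hi => ?_⟩⟩
  · exact le_inf' hS r fun k hk => hbr i k (by simp at hk; omega)
  · exact inf'_le r (by simpa using hi)

theorem le_of_changesSignAtLeast_expSum (K : ℕ) {b : ι → ℕ} (hr : ∀ i, 0 < r i)
    (hbK : ∀ i, b i ≤ K) (hbr : ∀ i j, b i < b j → r i ≤ r j)
    (hc : ∀ i, 0 ≤ (-1) ^ b i * c i) {m : ℕ} (h : ChangesSignAtLeast (expSum c r) m) :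
    m ≤ K := by
  induction K generalizing r c b m with
  | zero =>
    refine (h.eq_zero_of_nonneg (expSum_nonneg (fun i => (hr i).le) fun i => ?_)).le
    simpa [Nat.le_zero.1 (hbK i)] using hc i
  | succ K ih =>
    by_cases hbK' : ∀ i, b i ≤ K
    · exact (ih hr hbK' hbr hc h).trans K.le_succ
    obtain ⟨j, hj⟩ := not_forall.1 hbK'
    obtain ⟨μ, hμ, hsep⟩ := exists_pos_separating hr hbr ⟨j, by omega⟩
    obtain _ | m := m
    · exact K.succ.zero_le
    have hF : ChangesSignAtLeast (expSum (fun i => -c i) fun i => r i / μ) (m + 1) := by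
      convert h.mul (g := fun s => -(μ ^ s)⁻¹) fun x y => by
        rw [neg_mul_neg]; exact mul_pos (inv_pos.2 (by positivity)) (inv_pos.2 (by positivity))
        using 1
      funext s
      rw [expSum_div (fun i => (hr i).le) hμ]
      simp only [expSum, neg_mul, sum_neg_distrib, div_eq_mul_inv, mul_neg]
    have hr' : ∀ i, 0 < r i / μ := fun i => div_pos (hr i) hμ
    refine Nat.succ_le_succ (ih (b := fun i => b i - 1) hr' (fun i => by have := hbK i; omega)
      (fun i j hij => div_le_div_of_nonneg_right (hbr i j (by omega)) hμ.le) (fun i => ?_)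
      (hF.of_hasDerivAt (hasDerivAt_expSum hr')))
    have hci := hc i
    rcases hbi : b i with _ | k
    · have hlog : Real.log (r i / μ) ≤ 0 :=
        Real.log_nonpos (hr' i).le ((div_le_one hμ).2 ((hsep i).1 hbi))
      rw [hbi, pow_zero, one_mul] at hci
      rw [pow_zero, one_mul, neg_mul, ← mul_neg]
      exact mul_nonneg hci (neg_nonneg.2 hlog)
    · have hlog : 0 ≤ Real.log (r i / μ) :=
        Real.log_nonneg ((one_le_div hμ).2 ((hsep i).2 (by omega)))
      rw [hbi] at hci
      calc (0 : ℝ) ≤ (-1) ^ (k + 1) * c i * Real.log (r i / μ) := mul_nonneg hci hlog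
        _ = (-1) ^ (k + 1 - 1) * (-c i * Real.log (r i / μ)) := by
          rw [Nat.add_sub_cancel, pow_succ]; ring

end expSum

noncomputable def signChangesBelow {n : ℕ} (c : Fin (n + 1) → ℝ) (i : Fin (n + 1)) : ℕ :=
  #{j : Fin n | j.castSucc < i ∧ c j.castSucc * c j.succ < 0}

section signChangesBelow

variable {n : ℕ} (c : Fin (n + 1) → ℝ)

theorem signChangesBelow_le (i : Fin (n + 1)) :
    signChangesBelow c i ≤ #{j : Fin n | c j.castSucc * c j.succ < 0} :=
  card_le_card (monotone_filter_right _ fun _ _ h => h.2)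

theorem signChangesBelow_mono : Monotone (signChangesBelow c) := fun _ _ hii' =>
  card_le_card (monotone_filter_right _ fun _ _ h => ⟨h.1.trans_le hii', h.2⟩)

theorem signChangesBelow_succ (i : Fin n) :
    signChangesBelow c i.succ =
      signChangesBelow c i.castSucc + if c i.castSucc * c i.succ < 0 then 1 else 0 := by
  simp only [signChangesBelow, card_filter, Fin.castSucc_lt_succ_iff, Fin.castSucc_lt_castSucc_iff]
  rw [← Fintype.sum_ite_eq' i fun j => if c j.castSucc * c j.succ < 0 then 1 else 0,
    ← sum_add_distrib]
  refine sum_congr rfl fun j _ => ?_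
  rcases lt_trichotomy j i with h | rfl | h
  · simp [h, h.le, h.ne]
  · simp
  · simp [h.not_gt, h.not_ge, h.ne']

theorem neg_one_pow_signChangesBelow_mul_pos (hc : ∀ i, c i ≠ 0) (i : Fin (n + 1)) :
    0 < (-1) ^ signChangesBelow c i * (c i * c 0) := by
  induction i using Fin.induction with
  | zero => simpa [signChangesBelow] using mul_self_pos.2 (hc 0)
  | succ i ih =>
    rw [signChangesBelow_succ]
    refine pos_of_mul_pos_right ?_ (mul_self_nonneg (c i.castSucc))
    split_ifs with h
    · convert mul_pos ih (neg_pos.2 h) using 1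
      ring
    · have h' : 0 < c i.castSucc * c i.succ :=
        (not_lt.1 h).lt_of_ne' (mul_ne_zero (hc _) (hc _))
      convert mul_pos ih h' using 1
      ring

end signChangesBelow

theorem stmt1_general (n K : ℕ) (r c : Fin (n + 1) → ℝ)
    (hr0 : ∀ i, 0 < r i) (hmono : Monotone r)
    (hc : ∀ i, c i ≠ 0)
    (hK : K = (Finset.univ.filter fun i : Fin n =>
        c i.castSucc * c i.succ < 0).card)
    (E : ℝ → ℝ) (hE : ∀ s, E s = ∑ i, c i * r i ^ s)
    (m : ℕ) (t : Fin (m + 1) → ℝ) (ht : StrictMono t)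
    (halt : ∀ i : Fin m, E (t i.castSucc) * E (t i.succ) < 0) :
    m ≤ K := by
  have hsign : ChangesSignAtLeast (expSum (fun i => c i * c 0) r) m := by
    convert ChangesSignAtLeast.mul ⟨t, ht, halt⟩ (g := fun _ => c 0)
      fun _ _ => mul_self_pos.2 (hc 0) using 1
    funext s
    simp only [expSum, hE, sum_mul]
    exact sum_congr rfl fun i _ => by ring
  exact le_of_changesSignAtLeast_expSum K (b := signChangesBelow c) hr0
    (fun i => hK ▸ signChangesBelow_le c i)
    (fun i j hij => hmono ((signChangesBelow_mono c).reflect_lt hij).le)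
    (fun i => (neg_one_pow_signChangesBelow_mul_pos c hc i).le) hsign

/-- Descartes' lemma for exponential sums: if the coefficient sequence has `K`
sign changes then `E(s) = ∑ cᵢ rᵢ^s` changes sign at most `K` times on `ℝ`. -/
theorem stmt1 (n K : ℕ) (r c : Fin (n + 1) → ℝ)
    (hr0 : ∀ i, 0 < r i) (hr1 : ∀ i, r i < 1) (hmono : Monotone r)
    (hc : ∀ i, c i ≠ 0)
    (hK : K = (Finset.univ.filter fun i : Fin n =>
        c i.castSucc * c i.succ < 0).card)
    (E : ℝ → ℝ) (hE : ∀ s, E s = ∑ i, c i * r i ^ s)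
    (m : ℕ) (t : Fin (m + 1) → ℝ) (ht : StrictMono t)
    (halt : ∀ i : Fin m, E (t i.castSucc) * E (t i.succ) < 0) :
    m ≤ K :=
  stmt1_general n K r c hr0 hmono hc hK E hE m t ht halt
end

section
/- Let P = Σ_I c_I X^I be a multivariable real polynomial in n variables. Suppose that for every multi-index J the partial sum P_J = Σ_{I ⪯ J} c_I (sum over multi-indices I with I_i ≤ J_i for all i) is nonnegative, and the total sum of all coefficients is positive. Then P(x) > 0 for all x ∈ (0,1]^n. -/
/-!
Abel summation in every variable. Bound all exponents by a multi-index `K` and, for each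
variable, write `x ^ k = ∑_{k ≤ j ≤ K_i} w_j` with the nonnegative weights
`w_j = x ^ j - x ^ (j + 1)` for `j < K_i` and `w_{K_i} = x ^ K_i` (here `0 < x ≤ 1` is used).
Expanding every monomial this way and collecting terms gives
`P(x) = ∑_{J ≤ K} P_J ∏ᵢ w_{J_i}`, a combination of the partial sums `P_J ≥ 0` with
nonnegative coefficients, whose term at `J = K` is the positive total sum times a positive weight.
-/

open Finset

section AbelWeight

variable {R : Type*} [CommRing R]

def abelWeight (x : R) (M j : ℕ) : R := if j < M then x ^ j - x ^ (j + 1) else x ^ j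

theorem sum_Icc_abelWeight (x : R) {k M : ℕ} (hkM : k ≤ M) :
    ∑ j ∈ Icc k M, abelWeight x M j = x ^ k := by
  have htelescope : ∑ j ∈ Ico k M, (x ^ j - x ^ (j + 1)) = x ^ k - x ^ M := by
    rw [← neg_sub, ← sum_Ico_sub (fun j => x ^ j) hkM, ← sum_neg_distrib]
    simp only [neg_sub]
  have hbelow : ∑ j ∈ Ico k M, abelWeight x M j = ∑ j ∈ Ico k M, (x ^ j - x ^ (j + 1)) :=
    sum_congr rfl fun j hj => if_pos (mem_Ico.1 hj).2
  rw [← Ico_add_one_right_eq_Icc, sum_Ico_succ_top hkM, hbelow, htelescope, abelWeight,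
    if_neg (lt_irrefl M), sub_add_cancel]

variable [PartialOrder R] [IsStrictOrderedRing R]

theorem abelWeight_nonneg {x : R} (hx₀ : 0 ≤ x) (hx₁ : x ≤ 1) (M j : ℕ) :
    0 ≤ abelWeight x M j := by
  unfold abelWeight
  split_ifs
  · exact sub_nonneg.2 (pow_le_pow_of_le_one hx₀ hx₁ j.le_succ)
  · exact pow_nonneg hx₀ j

theorem abelWeight_self_pos {x : R} (hx : 0 < x) (M : ℕ) : 0 < abelWeight x M M := by
  simpa [abelWeight] using pow_pos hx M

end AbelWeight

theorem prod_pow_eq_sum_Icc_prod_abelWeight {ι R : Type*} [Fintype ι] [DecidableEq ι] [CommRing R]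
    (x : ι → R) {I K : ι → ℕ} (hIK : I ≤ K) :
    ∏ i, x i ^ I i = ∑ J ∈ Icc I K, ∏ i, abelWeight (x i) (K i) (J i) := by
  rw [Pi.Icc_eq, ← prod_univ_sum]
  exact prod_congr rfl fun i _ => (sum_Icc_abelWeight (x i) (hIK i)).symm

theorem sum_mul_sum_Icc_eq_sum_Iic {α R : Type*} [PartialOrder α] [LocallyFiniteOrder α]
    [LocallyFiniteOrderBot α] [DecidableLE α] [NonUnitalNonAssocSemiring R]
    (s : Finset α) (c f : α → R) (K : α) :
    ∑ I ∈ s, c I * ∑ J ∈ Icc I K, f J = ∑ J ∈ Iic K, (∑ I ∈ s with I ≤ J, c I) * f J := by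
  simp_rw [mul_sum, sum_mul]
  exact sum_comm' fun I J => by simp only [mem_Icc, mem_Iic, mem_filter]; tauto

/-- Weak positive dominance: if every partial sum of coefficients (over
multi-indices `I ⪯ J`) is nonnegative and the total sum is positive, then the
polynomial is positive on `(0,1]^n`. -/
theorem stmt2 (n : ℕ) (c : (Fin n → ℕ) →₀ ℝ)
    (hWPD : ∀ J : Fin n → ℕ,
      0 ≤ ∑ I ∈ c.support.filter (fun I => ∀ i, I i ≤ J i), c I)
    (htot : 0 < ∑ I ∈ c.support, c I)
    (x : Fin n → ℝ) (hx : ∀ i, 0 < x i ∧ x i ≤ 1) :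
    0 < ∑ I ∈ c.support, c I * ∏ i, x i ^ I i := by
  classical
  set K := c.support.sup id
  have hK : ∀ I ∈ c.support, I ≤ K := fun I hI => le_sup (f := id) hI
  have hexpand : ∑ I ∈ c.support, c I * ∏ i, x i ^ I i =
      ∑ J ∈ Iic K, (∑ I ∈ c.support with I ≤ J, c I) * ∏ i, abelWeight (x i) (K i) (J i) := by
    rw [← sum_mul_sum_Icc_eq_sum_Iic]
    exact sum_congr rfl fun I hI => by rw [prod_pow_eq_sum_Icc_prod_abelWeight x (hK I hI)]
  simp only [hexpand, Pi.le_def]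
  refine sum_pos' (fun J _ => mul_nonneg (hWPD J) (prod_nonneg fun i _ =>
    abelWeight_nonneg (hx i).1.le (hx i).2 _ _)) ⟨K, mem_Iic.2 le_rfl, mul_pos ?_
    (prod_pos fun i _ => abelWeight_self_pos (hx i).1 _)⟩
  rwa [filter_true_of_mem fun I hI i => hK I hI i]
end

section
/- Let P = Σ_I c_I X^I be a multivariable real polynomial in n variables. If for every multi-index J the partial sum P_J = Σ_{I ⪯ J} c_I is strictly positive, then P(x) > 0 for all x ∈ [0,1]^n. -/
/-!
Let `w_{t,N}` be the law of `min(G, N)` for a geometric variable `G` with `P(G ≥ m) = t ^ m`: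
`w(m) = t ^ m - t ^ (m + 1)` for `m < N` and `w(N) = t ^ N`. For `t ∈ [0,1]` these weights are
nonnegative and `t ^ k = ∑_{k ≤ m ≤ N} w(m)`. Taking the product of such laws over the
coordinates, with `M` bounding every exponent of `P`, the monomial `x ^ I` is the mass of the box
`[I, M]`. Exchanging the order of summation gives `P(x) = ∑_{J ≤ M} P_J · w(J)`, a convex
combination of the positive partial sums `P_J`.
-/

open Finset

section TruncGeomWeight

variable {R : Type*} [CommRing R]

def truncGeomWeight (t : R) (N m : ℕ) : R :=
  if m = N then t ^ N else t ^ m - t ^ (m + 1)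

lemma truncGeomWeight_nonneg [PartialOrder R] [IsOrderedRing R] {t : R} (h₀ : 0 ≤ t)
    (h₁ : t ≤ 1) (N m : ℕ) : 0 ≤ truncGeomWeight t N m := by
  unfold truncGeomWeight
  split_ifs
  · exact pow_nonneg h₀ N
  · exact sub_nonneg.2 (pow_le_pow_of_le_one h₀ h₁ m.le_succ)

lemma sum_Icc_truncGeomWeight (t : R) {k N : ℕ} (hk : k ≤ N) :
    ∑ m ∈ Icc k N, truncGeomWeight t N m = t ^ k := by
  induction hk using Nat.decreasingInduction with
  | self => simp [truncGeomWeight]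
  | of_succ k hk ih =>
    rw [← add_sum_Ioc_eq_sum_Icc hk.le, ← Icc_add_one_left_eq_Ioc, ih, truncGeomWeight,
      if_neg hk.ne]
    ring

variable {n : ℕ}

def prodTruncGeomWeight (x : Fin n → R) (M J : Fin n → ℕ) : R :=
  ∏ i, truncGeomWeight (x i) (M i) (J i)

lemma prodTruncGeomWeight_nonneg [PartialOrder R] [IsOrderedRing R] {x : Fin n → R}
    (hx : ∀ i, 0 ≤ x i ∧ x i ≤ 1) (M J : Fin n → ℕ) : 0 ≤ prodTruncGeomWeight x M J :=
  prod_nonneg fun i _ => truncGeomWeight_nonneg (hx i).1 (hx i).2 _ _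

lemma sum_Icc_prodTruncGeomWeight (x : Fin n → R) {I M : Fin n → ℕ} (hIM : I ≤ M) :
    ∑ J ∈ Icc I M, prodTruncGeomWeight x M J = ∏ i, x i ^ I i := by
  unfold prodTruncGeomWeight
  rw [Pi.Icc_eq, ← prod_univ_sum]
  exact prod_congr rfl fun i _ => sum_Icc_truncGeomWeight _ (hIM i)

lemma sum_mul_prod_pow_eq_sum_mul_prodTruncGeomWeight (c : (Fin n → ℕ) →₀ R) (x : Fin n → R)
    {M : Fin n → ℕ} (hM : ∀ I ∈ c.support, I ≤ M) :
    ∑ I ∈ c.support, c I * ∏ i, x i ^ I i =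
      ∑ J ∈ Icc 0 M,
        (∑ I ∈ c.support.filter (fun I => ∀ i, I i ≤ J i), c I) * prodTruncGeomWeight x M J := by
  calc ∑ I ∈ c.support, c I * ∏ i, x i ^ I i
      = ∑ I ∈ c.support, ∑ J ∈ Icc I M, c I * prodTruncGeomWeight x M J := by
        refine sum_congr rfl fun I hI => ?_
        rw [← mul_sum, sum_Icc_prodTruncGeomWeight x (hM I hI)]
    _ = ∑ J ∈ Icc 0 M, ∑ I ∈ c.support.filter (fun I => ∀ i, I i ≤ J i),
          c I * prodTruncGeomWeight x M J := by
        refine sum_comm' fun I J => ?_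
        simp only [mem_Icc, mem_filter]
        exact ⟨fun ⟨hI, hIJ, hJM⟩ => ⟨⟨hI, hIJ⟩, zero_le, hJM⟩,
          fun ⟨⟨hI, hIJ⟩, _, hJM⟩ => ⟨hI, hIJ, hJM⟩⟩
    _ = _ := sum_congr rfl fun J _ => (sum_mul ..).symm

end TruncGeomWeight

lemma sum_mul_pos_of_sum_eq_one {R κ : Type*} [Semiring R] [PartialOrder R]
    [IsStrictOrderedRing R] {s : Finset κ} {f w : κ → R} (hf : ∀ j ∈ s, 0 < f j)
    (hw : ∀ j ∈ s, 0 ≤ w j) (hsum : ∑ j ∈ s, w j = 1) : 0 < ∑ j ∈ s, f j * w j := by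
  obtain ⟨j, hj, hwj⟩ := exists_ne_zero_of_sum_ne_zero (hsum ▸ one_ne_zero)
  exact sum_pos' (fun k hk => mul_nonneg (hf k hk).le (hw k hk))
    ⟨j, hj, mul_pos (hf j hj) ((hw j hj).lt_of_ne' hwj)⟩

/-- Positive dominance: if every partial sum of coefficients (over multi-indices
`I ⪯ J`) is strictly positive, then the polynomial is positive on `[0,1]^n`. -/
theorem stmt3 (n : ℕ) (c : (Fin n → ℕ) →₀ ℝ)
    (hPD : ∀ J : Fin n → ℕ,
      0 < ∑ I ∈ c.support.filter (fun I => ∀ i, I i ≤ J i), c I)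
    (x : Fin n → ℝ) (hx : ∀ i, 0 ≤ x i ∧ x i ≤ 1) :
    0 < ∑ I ∈ c.support, c I * ∏ i, x i ^ I i := by
  obtain ⟨M, hM⟩ := c.support.bddAbove
  rw [sum_mul_prod_pow_eq_sum_mul_prodTruncGeomWeight c x fun I hI => hM hI]
  refine sum_mul_pos_of_sum_eq_one (fun J _ => hPD J)
    (fun J _ => prodTruncGeomWeight_nonneg hx M J) ?_
  simpa using sum_Icc_prodTruncGeomWeight x zero_le
end

section
/- For all real a, x ∈ [0,1] and every integer k ≥ 2, (a·x^k + 1 − a) − (a·x + 1 − a)^k ≤ (1/8)·k·(k−1)·(1−x)². -/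
/-!
Write `y = a x + 1 - a` and `f k = (a x^k + 1 - a) - y^k`, so `f 0 = 0`. Since `1 - y = a (1 - x)`
and `y - x = (1 - a)(1 - x)`, the increment is
`f (k+1) - f k = a (1 - x)(y^k - x^k) ≤ k a (1 - a)(1 - x)^2 ≤ k (1 - x)^2 / 4`,
and summing over `k` gives `k (k - 1)(1 - x)^2 / 8`.
-/

theorem abs_pow_sub_pow_le_of_abs_le_one {α : Type*} [CommRing α] [LinearOrder α]
    [IsOrderedRing α] {a b : α} (ha : |a| ≤ 1) (hb : |b| ≤ 1) (n : ℕ) :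
    |a ^ n - b ^ n| ≤ n * |a - b| := by
  calc |a ^ n - b ^ n| ≤ |a - b| * n * max |a| |b| ^ (n - 1) := abs_pow_sub_pow_le a b n
    _ ≤ |a - b| * n * 1 := by
        gcongr
        exact pow_le_one₀ (le_max_of_le_left (abs_nonneg a)) (max_le ha hb)
    _ = n * |a - b| := by ring

theorem mixture_pow_gap_succ (a x : ℝ) (n : ℕ) :
    (a * x ^ (n + 1) + 1 - a) - (a * x + 1 - a) ^ (n + 1) =
      ((a * x ^ n + 1 - a) - (a * x + 1 - a) ^ n) +
        a * (1 - x) * ((a * x + 1 - a) ^ n - x ^ n) := by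
  ring

theorem mixture_pow_gap_succ_sub_le {a x : ℝ} (ha : a ∈ Set.Icc (0 : ℝ) 1)
    (hx : x ∈ Set.Icc (0 : ℝ) 1) (n : ℕ) :
    a * (1 - x) * ((a * x + 1 - a) ^ n - x ^ n) ≤ n / 4 * (1 - x) ^ 2 := by
  obtain ⟨ha0, ha1⟩ := ha
  obtain ⟨hx0, hx1⟩ := hx
  have hy : |a * x + 1 - a| ≤ 1 := abs_le.2 ⟨by nlinarith, by nlinarith⟩
  have hxabs : |x| ≤ 1 := abs_le.2 ⟨by linarith, hx1⟩
  have hpow : (a * x + 1 - a) ^ n - x ^ n ≤ n * ((1 - a) * (1 - x)) := by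
    have h := abs_pow_sub_pow_le_of_abs_le_one hy hxabs n
    rw [show a * x + 1 - a - x = (1 - a) * (1 - x) by ring,
      abs_of_nonneg (mul_nonneg (sub_nonneg.2 ha1) (sub_nonneg.2 hx1))] at h
    exact (le_abs_self _).trans h
  have ha_var : a * (1 - a) ≤ 1 / 4 := by nlinarith [sq_nonneg (2 * a - 1)]
  calc a * (1 - x) * ((a * x + 1 - a) ^ n - x ^ n)
      ≤ a * (1 - x) * (n * ((1 - a) * (1 - x))) := by
        gcongr
    _ = n * (a * (1 - a)) * (1 - x) ^ 2 := by ring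
    _ ≤ n * (1 / 4) * (1 - x) ^ 2 := by gcongr
    _ = n / 4 * (1 - x) ^ 2 := by ring

theorem stmt4_general (a x : ℝ) (ha : a ∈ Set.Icc (0:ℝ) 1) (hx : x ∈ Set.Icc (0:ℝ) 1)
    (k : ℕ) :
    (a * x ^ k + 1 - a) - (a * x + 1 - a) ^ k ≤
      (1 / 8) * (k : ℝ) * ((k : ℝ) - 1) * (1 - x) ^ 2 := by
  induction k with
  | zero => simp
  | succ n ih =>
    rw [mixture_pow_gap_succ]
    calc _ ≤ (1 / 8) * (n : ℝ) * ((n : ℝ) - 1) * (1 - x) ^ 2 + n / 4 * (1 - x) ^ 2 :=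
          add_le_add ih (mixture_pow_gap_succ_sub_le ha hx n)
      _ = _ := by push_cast; ring

theorem stmt4 (a x : ℝ) (ha : a ∈ Set.Icc (0:ℝ) 1) (hx : x ∈ Set.Icc (0:ℝ) 1)
    (k : ℕ) (hk : 2 ≤ k) :
    (a * x ^ k + 1 - a) - (a * x + 1 - a) ^ k ≤
      (1 / 8) * (k : ℝ) * ((k : ℝ) - 1) * (1 - x) ^ 2 :=
  stmt4_general a x ha hx k
end

section
/- Let k ≥ 1 be an integer, M ≥ 2, 0 ≤ x₁ ≤ x₂ ≤ ... ≤ x_M real numbers, and λ₁,...,λ_M ≥ 0 with Σᵢ λᵢ = 1. Then 0 ≤ Σᵢ λᵢ xᵢ^k − (Σᵢ λᵢ xᵢ)^k ≤ (1/8)·k·(k−1)·x_M^{k−2}·(x_M − x₁)². -/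
/-!
Jensen's inequality for the convex function `t ↦ t ^ k` gives the lower bound. For the upper
bound, `C = k (k - 1) x_M ^ (k - 2)` bounds the second derivative of `t ^ k` on `[0, x_M]`, so
`t ↦ C / 2 * t ^ 2 - t ^ k` is convex there. Jensen's inequality for this function bounds the
Jensen gap of `t ^ k` by `C / 2` times the variance of the weighted points, and by Popoviciu's
inequality a distribution supported on `[x₁, x_M]` has variance at most `(x_M - x₁) ^ 2 / 4`.
-/

open Finset Set

section WeightedSums

variable {ι : Type*} {s : Finset ι} {w x : ι → ℝ}

theorem weighted_sum_sq_sub_sq_le (hw : ∀ i ∈ s, 0 ≤ w i) (hw₁ : ∑ i ∈ s, w i = 1)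
    {a b : ℝ} (hx : ∀ i ∈ s, x i ∈ Icc a b) :
    ∑ i ∈ s, w i * x i ^ 2 - (∑ i ∈ s, w i * x i) ^ 2 ≤ (b - a) ^ 2 / 4 := by
  set μ := ∑ i ∈ s, w i * x i
  have hspread : 0 ≤ ∑ i ∈ s, w i * ((x i - a) * (b - x i)) :=
    sum_nonneg fun i hi ↦ mul_nonneg (hw i hi)
      (mul_nonneg (sub_nonneg.2 (hx i hi).1) (sub_nonneg.2 (hx i hi).2))
  have hexpand : ∑ i ∈ s, w i * ((x i - a) * (b - x i)) =
      (a + b) * μ - a * b - ∑ i ∈ s, w i * x i ^ 2 := by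
    have h : ∀ i ∈ s, w i * ((x i - a) * (b - x i)) =
        (a + b) * (w i * x i) - a * b * w i - w i * x i ^ 2 := fun i _ ↦ by ring
    rw [sum_congr rfl h, sum_sub_distrib, sum_sub_distrib, ← mul_sum, ← mul_sum, hw₁, mul_one]
  nlinarith [sq_nonneg (a + b - 2 * μ)]

theorem sum_mul_sub_le_of_convexOn_sq_sub {f : ℝ → ℝ} {C : ℝ} {D : Set ℝ}
    (hf : ConvexOn ℝ D fun t ↦ C / 2 * t ^ 2 - f t)
    (hw : ∀ i ∈ s, 0 ≤ w i) (hw₁ : ∑ i ∈ s, w i = 1) (hx : ∀ i ∈ s, x i ∈ D) :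
    ∑ i ∈ s, w i * f (x i) - f (∑ i ∈ s, w i * x i) ≤
      C / 2 * (∑ i ∈ s, w i * x i ^ 2 - (∑ i ∈ s, w i * x i) ^ 2) := by
  have h := hf.map_sum_le hw hw₁ hx
  simp only [smul_eq_mul, mul_sub, sum_sub_distrib] at h
  have hC : ∑ i ∈ s, w i * (C / 2 * x i ^ 2) = C / 2 * ∑ i ∈ s, w i * x i ^ 2 := by
    rw [mul_sum]
    exact sum_congr rfl fun i _ ↦ by ring
  linarith

end WeightedSums

theorem Nat.cast_mul_cast_sub_one_nonneg (k : ℕ) : (0 : ℝ) ≤ k * (k - 1) := by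
  rcases k with _ | k
  · simp
  · simp only [Nat.cast_add, Nat.cast_one, add_sub_cancel_right]
    positivity

theorem convexOn_sq_sub_pow (k : ℕ) {b : ℝ} :
    ConvexOn ℝ (Icc 0 b) fun t ↦ k * (k - 1) * b ^ (k - 2) / 2 * t ^ 2 - t ^ k := by
  set C : ℝ := k * (k - 1) * b ^ (k - 2)
  have hk_cast : (k : ℝ) * ((k - 1 : ℕ) : ℝ) = k * (k - 1) := by
    rcases k with _ | k <;> simp
  refine convexOn_of_hasDerivWithinAt2_nonneg (convex_Icc 0 b) (by fun_prop)
    (f' := fun t ↦ C * t - k * t ^ (k - 1)) (f'' := fun t ↦ C - k * (k - 1) * t ^ (k - 2))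
    (fun t _ ↦ ?_) (fun t _ ↦ ?_) (fun t ht ↦ ?_)
  · refine (((hasDerivAt_pow 2 t).const_mul (C / 2)).sub
      (hasDerivAt_pow k t)).hasDerivWithinAt.congr_deriv ?_
    push_cast
    ring
  · refine (((hasDerivAt_id t).const_mul C).sub
      ((hasDerivAt_pow (k - 1) t).const_mul (k : ℝ))).hasDerivWithinAt.congr_deriv ?_
    rw [← mul_assoc, hk_cast, Nat.sub_sub, mul_one]
  · rw [interior_Icc] at ht
    have htb : t ^ (k - 2) ≤ b ^ (k - 2) := pow_le_pow_left₀ ht.1.le ht.2.le _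
    simp only [C, sub_nonneg]
    gcongr
    exact Nat.cast_mul_cast_sub_one_nonneg k

theorem stmt5 (k : ℕ) (M : ℕ) (hM : 2 ≤ M)
    (x lam : Fin M → ℝ) (hx0 : 0 ≤ x ⟨0, by omega⟩) (hxmono : Monotone x)
    (hlam : ∀ i, 0 ≤ lam i) (hsum : ∑ i, lam i = 1) :
    0 ≤ (∑ i, lam i * x i ^ k) - (∑ i, lam i * x i) ^ k ∧
    (∑ i, lam i * x i ^ k) - (∑ i, lam i * x i) ^ k ≤
      (1 / 8) * (k : ℝ) * ((k : ℝ) - 1) * x ⟨M - 1, by omega⟩ ^ (k - 2) *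
        (x ⟨M - 1, by omega⟩ - x ⟨0, by omega⟩) ^ 2 := by
  set a := x ⟨0, by omega⟩
  set b := x ⟨M - 1, by omega⟩
  have hx : ∀ i, x i ∈ Icc a b := fun i ↦
    ⟨hxmono (Fin.mk_le_of_le_val (Nat.zero_le _)),
      hxmono (Fin.le_def.2 (Nat.le_sub_one_of_lt i.isLt))⟩
  have hw : ∀ i ∈ Finset.univ, 0 ≤ lam i := fun i _ ↦ hlam i
  constructor
  · have h := (convexOn_pow k).map_sum_le hw hsum fun i _ ↦ hx0.trans (hx i).1
    simp only [smul_eq_mul] at h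
    linarith
  · have hC : 0 ≤ (k : ℝ) * (k - 1) * b ^ (k - 2) / 2 :=
      div_nonneg (mul_nonneg (Nat.cast_mul_cast_sub_one_nonneg k)
        (pow_nonneg (hx0.trans (hx ⟨0, by omega⟩).2) _)) zero_le_two
    calc (∑ i, lam i * x i ^ k) - (∑ i, lam i * x i) ^ k
        ≤ (k : ℝ) * (k - 1) * b ^ (k - 2) / 2 *
            (∑ i, lam i * x i ^ 2 - (∑ i, lam i * x i) ^ 2) :=
          sum_mul_sub_le_of_convexOn_sq_sub (f := (· ^ k)) (convexOn_sq_sub_pow k) hw hsum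
            fun i _ ↦ ⟨hx0.trans (hx i).1, (hx i).2⟩
      _ ≤ (k : ℝ) * (k - 1) * b ^ (k - 2) / 2 * ((b - a) ^ 2 / 4) :=
          mul_le_mul_of_nonneg_left (weighted_sum_sq_sub_sq_le hw hsum fun i _ ↦ hx i) hC
      _ = _ := by ring
end

section
/- For all real numbers x, y and nonnegative integers r, s and positive integer d with r + s ≤ 2d, we have x^r·y^s/(1 + x² + y²)^d ≤ (1/2)^{min(r,s)}, where x^r y^s is interpreted as |x|^r·|y|^s. -/
/-!
Write `a = 1 + x² + y²` and assume `r ≤ s`. Then `|x|^r |y|^s = (|x||y|)^r · |y|^(s-r)`;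
AM-GM gives `|x||y| ≤ a/2`, and `|y|^(s-r) ≤ a^(d-r)` because `s - r ≤ 2(d - r)`.
-/

lemma abs_pow_le_one_add_sq_pow (y : ℝ) {n k : ℕ} (hnk : n ≤ 2 * k) :
    |y| ^ n ≤ (1 + y ^ 2) ^ k := by
  have hmax : max 1 |y| ^ 2 ≤ 1 + y ^ 2 := by
    rcases max_choice 1 |y| with h | h <;> rw [h] <;> nlinarith [sq_abs y]
  calc |y| ^ n ≤ max 1 |y| ^ n := pow_le_pow_left₀ (abs_nonneg y) (le_max_right 1 |y|) n
    _ ≤ max 1 |y| ^ (2 * k) := pow_le_pow_right₀ (le_max_left 1 |y|) hnk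
    _ = (max 1 |y| ^ 2) ^ k := pow_mul _ 2 k
    _ ≤ (1 + y ^ 2) ^ k := pow_le_pow_left₀ (by positivity) hmax k

lemma abs_mul_abs_le_half_one_add_sq_add_sq (x y : ℝ) :
    |x| * |y| ≤ 1 / 2 * (1 + x ^ 2 + y ^ 2) := by
  nlinarith [sq_nonneg (|x| - |y|), sq_abs x, sq_abs y]

lemma abs_pow_mul_abs_pow_le_of_le {r s d : ℕ} (x y : ℝ) (hrs : r + s ≤ 2 * d) (h : r ≤ s) :
    |x| ^ r * |y| ^ s ≤ (1 / 2 : ℝ) ^ r * (1 + x ^ 2 + y ^ 2) ^ d := by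
  set a := 1 + x ^ 2 + y ^ 2
  have hrd : r ≤ d := by omega
  have hy : |y| ^ (s - r) ≤ a ^ (d - r) :=
    (abs_pow_le_one_add_sq_pow y (by omega)).trans
      (pow_le_pow_left₀ (by positivity) (by nlinarith [sq_nonneg x]) _)
  calc |x| ^ r * |y| ^ s = (|x| * |y|) ^ r * |y| ^ (s - r) := by
        rw [mul_pow, mul_assoc, ← pow_add, Nat.add_sub_cancel' h]
    _ ≤ (1 / 2 * a) ^ r * a ^ (d - r) := by
        gcongr ?_ ^ r * ?_
        exact abs_mul_abs_le_half_one_add_sq_add_sq x y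
    _ = (1 / 2 : ℝ) ^ r * a ^ d := by
        rw [mul_pow, mul_assoc, ← pow_add, Nat.add_sub_cancel' hrd]

theorem stmt7_general (x y : ℝ) (r s d : ℕ) (hrs : r + s ≤ 2 * d) :
    |x| ^ r * |y| ^ s / (1 + x ^ 2 + y ^ 2) ^ d ≤ (1 / 2 : ℝ) ^ (min r s) := by
  rw [div_le_iff₀ (by positivity)]
  rcases le_total r s with h | h
  · rw [min_eq_left h]
    exact abs_pow_mul_abs_pow_le_of_le x y hrs h
  · rw [min_eq_right h, mul_comm, add_right_comm]
    exact abs_pow_mul_abs_pow_le_of_le y x (by omega) h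

theorem stmt7 (x y : ℝ) (r s d : ℕ) (hd : 1 ≤ d) (hrs : r + s ≤ 2 * d) :
    |x| ^ r * |y| ^ s / (1 + x ^ 2 + y ^ 2) ^ d ≤ (1 / 2 : ℝ) ^ (min r s) :=
  stmt7_general x y r s d hrs
end

section
/- Let s ≥ 2 be real. For real x ∈ (0,1), h, y with (x+h)² + y² < 1 and (−x+h)² + y² < 1, set p_u = (−x+h, y), p_v = (x+h, y), q_u = (−x, 0), q_v = (x, 0), and let ẑ = Σ⁻¹(z) denote inverse stereographic projection. Then ‖p̂_u − p̂_v‖^{−2} − ‖q̂_u − q̂_v‖^{−2} = (h⁴ + y²(2 + 2x² + y²) + h²(2 − 2x² + 2y²))/(16x²) ≥ 0, with equality iff h = y = 0. -/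
noncomputable def invStereo (p : ℝ × ℝ) : ℝ × ℝ × ℝ :=
  (2 * p.1 / (1 + p.1 ^ 2 + p.2 ^ 2), 2 * p.2 / (1 + p.1 ^ 2 + p.2 ^ 2),
    1 - 2 / (1 + p.1 ^ 2 + p.2 ^ 2))

def normSq3 (v : ℝ × ℝ × ℝ) : ℝ := v.1 ^ 2 + v.2.1 ^ 2 + v.2.2 ^ 2

/-! The chordal distance between stereographic preimages is
`‖p̂ - q̂‖² = 4‖p - q‖² / ((1 + ‖p‖²)(1 + ‖q‖²))`. Both pairs have Euclidean separation `2x`,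
so the difference of inverse squared chordal distances is
`((1 + ‖p_u‖²)(1 + ‖p_v‖²) - (1 + x²)²) / (16x²)`, whose numerator equals
`(h² + y²)² + 2(1 + x²)y² + 2(1 - x²)h²`: a sum of squares with positive weights when `x² < 1`. -/

theorem normSq3_invStereo_sub (p q : ℝ × ℝ) :
    normSq3 (invStereo p - invStereo q) =
      4 * ((p.1 - q.1) ^ 2 + (p.2 - q.2) ^ 2) /
        ((1 + p.1 ^ 2 + p.2 ^ 2) * (1 + q.1 ^ 2 + q.2 ^ 2)) := by
  have hp : 0 < 1 + p.1 ^ 2 + p.2 ^ 2 := by positivity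
  have hq : 0 < 1 + q.1 ^ 2 + q.2 ^ 2 := by positivity
  simp only [normSq3, invStereo, Prod.fst_sub, Prod.snd_sub]
  field_simp
  ring

theorem inv_normSq3_invStereo_sub (p q : ℝ × ℝ) :
    (normSq3 (invStereo p - invStereo q))⁻¹ =
      (1 + p.1 ^ 2 + p.2 ^ 2) * (1 + q.1 ^ 2 + q.2 ^ 2) /
        (4 * ((p.1 - q.1) ^ 2 + (p.2 - q.2) ^ 2)) := by
  rw [normSq3_invStereo_sub, inv_div]

section Numerator

variable {x h y : ℝ}

theorem chordal_gap_numerator_eq :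
    h ^ 4 + y ^ 2 * (2 + 2 * x ^ 2 + y ^ 2) + h ^ 2 * (2 - 2 * x ^ 2 + 2 * y ^ 2) =
      (h ^ 2 + y ^ 2) ^ 2 + 2 * (1 + x ^ 2) * y ^ 2 + 2 * (1 - x ^ 2) * h ^ 2 := by
  ring

theorem chordal_gap_numerator_nonneg (hx : x ^ 2 ≤ 1) :
    0 ≤ h ^ 4 + y ^ 2 * (2 + 2 * x ^ 2 + y ^ 2) + h ^ 2 * (2 - 2 * x ^ 2 + 2 * y ^ 2) := by
  rw [chordal_gap_numerator_eq]
  have : 0 ≤ 1 - x ^ 2 := by linarith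
  positivity

theorem chordal_gap_numerator_eq_zero_iff (hx : x ^ 2 < 1) :
    h ^ 4 + y ^ 2 * (2 + 2 * x ^ 2 + y ^ 2) + h ^ 2 * (2 - 2 * x ^ 2 + 2 * y ^ 2) = 0 ↔
      h = 0 ∧ y = 0 := by
  rw [chordal_gap_numerator_eq]
  constructor
  · intro hN
    have hx' : 0 < 1 - x ^ 2 := by linarith
    have hh : h ^ 2 = 0 := by nlinarith [sq_nonneg (h ^ 2 + y ^ 2), sq_nonneg x, sq_nonneg y]
    have hy : y ^ 2 = 0 := by nlinarith [sq_nonneg (h ^ 2 + y ^ 2), sq_nonneg x, sq_nonneg h]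
    exact ⟨pow_eq_zero_iff two_ne_zero |>.mp hh, pow_eq_zero_iff two_ne_zero |>.mp hy⟩
  · rintro ⟨rfl, rfl⟩
    ring

end Numerator

theorem stmt14_general (x h y : ℝ) (hx : x ∈ Set.Ioo (0:ℝ) 1) :
    (normSq3 (invStereo (-x + h, y) - invStereo (x + h, y)))⁻¹ -
        (normSq3 (invStereo (-x, 0) - invStereo (x, 0)))⁻¹ =
      (h ^ 4 + y ^ 2 * (2 + 2 * x ^ 2 + y ^ 2) + h ^ 2 * (2 - 2 * x ^ 2 + 2 * y ^ 2)) /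
        (16 * x ^ 2) ∧
    0 ≤ (h ^ 4 + y ^ 2 * (2 + 2 * x ^ 2 + y ^ 2) + h ^ 2 * (2 - 2 * x ^ 2 + 2 * y ^ 2)) /
        (16 * x ^ 2) ∧
    ((h ^ 4 + y ^ 2 * (2 + 2 * x ^ 2 + y ^ 2) + h ^ 2 * (2 - 2 * x ^ 2 + 2 * y ^ 2)) /
        (16 * x ^ 2) = 0 ↔ h = 0 ∧ y = 0) := by
  obtain ⟨hx0, hx1⟩ := hx
  have hx2 : x ^ 2 < 1 := by nlinarith
  have h16 : 0 < 16 * x ^ 2 := by positivity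
  refine ⟨?_, div_nonneg (chordal_gap_numerator_nonneg hx2.le) h16.le, ?_⟩
  · rw [inv_normSq3_invStereo_sub, inv_normSq3_invStereo_sub]
    dsimp only
    rw [show (-x + h - (x + h)) ^ 2 + (y - y) ^ 2 = 4 * x ^ 2 by ring,
      show (-x - x) ^ 2 + ((0 : ℝ) - 0) ^ 2 = 4 * x ^ 2 by ring, ← sub_div]
    congr 1 <;> ring
  · rw [div_eq_zero_iff, or_iff_left h16.ne']
    exact chordal_gap_numerator_eq_zero_iff hx2

theorem stmt14 (s x h y : ℝ) (hs : 2 ≤ s) (hx : x ∈ Set.Ioo (0:ℝ) 1)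
    (h1 : (x + h) ^ 2 + y ^ 2 < 1) (h2 : (-x + h) ^ 2 + y ^ 2 < 1) :
    (normSq3 (invStereo (-x + h, y) - invStereo (x + h, y)))⁻¹ -
        (normSq3 (invStereo (-x, 0) - invStereo (x, 0)))⁻¹ =
      (h ^ 4 + y ^ 2 * (2 + 2 * x ^ 2 + y ^ 2) + h ^ 2 * (2 - 2 * x ^ 2 + 2 * y ^ 2)) /
        (16 * x ^ 2) ∧
    0 ≤ (h ^ 4 + y ^ 2 * (2 + 2 * x ^ 2 + y ^ 2) + h ^ 2 * (2 - 2 * x ^ 2 + 2 * y ^ 2)) /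
        (16 * x ^ 2) ∧
    ((h ^ 4 + y ^ 2 * (2 + 2 * x ^ 2 + y ^ 2) + h ^ 2 * (2 - 2 * x ^ 2 + 2 * y ^ 2)) /
        (16 * x ^ 2) = 0 ↔ h = 0 ∧ y = 0) :=
  stmt14_general x h y hx
end
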